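/- Failure of partial handshaking in PCL: let a, b, c, a', b', c' be pairwise distinct propositional atoms. Then the PCL theory {(b ∧ c) ↠ a, (a ∧ c) ↠ b, (a' ∧ b') ↠ c'} does not derive a in PCL. -/

import Mathlib

/-!
Interpret PCL in a Heyting algebra, reading `p ↠ q` as `q ⊔ (pᶜ ⊓ qᶜᶜ)`. This validates the three
contract axioms: `p ↠ p` collapses to `p` because `pᶜ ⊓ pᶜᶜ = ⊥`, and `pᶜ`, `qᶜᶜ` vary in the
directions the monotonicity axiom requires. A contract with a refuted premise, `⊥ ↠ q = qᶜᶜ`, thus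
holds as soon as its promise is dense, even when the promise itself is not true. In the chain
`⊥ < 1 < ⊤` put `c = ⊥`, `a = b = 1` and `c' = ⊤`: all three contracts evaluate to `⊤`, `a` does not.
-/
namespace Contracts

/-! ### PCL: propositional contract logic -/

inductive PCL (A : Type) : Type where
  | atom (a : A)
  | top
  | bot
  | and (p q : PCL A)
  | or (p q : PCL A)
  | imp (p q : PCL A)
  | cimp (p q : PCL A)    -- contractual implication ↠

namespace PCL

/-- Hilbert-style provability for PCL: intuitionistic propositional logic
extended with the axioms `⊤ ↠ ⊤`, `(p ↠ p) → p` and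
`(p' → p) → (p ↠ q) → (q → q') → (p' ↠ q')`. -/
inductive Proof {A : Type} : Set (PCL A) → PCL A → Prop where
  | ax {Γ : Set (PCL A)} {p} (h : p ∈ Γ) : Proof Γ p
  | mp {Γ} {p q} (h1 : Proof Γ (imp p q)) (h2 : Proof Γ p) : Proof Γ q
  | axK {Γ} {p q} : Proof Γ (imp p (imp q p))
  | axS {Γ} {p q r} : Proof Γ (imp (imp p (imp q r)) (imp (imp p q) (imp p r)))
  | andI {Γ} {p q} : Proof Γ (imp p (imp q (and p q)))
  | andE1 {Γ} {p q} : Proof Γ (imp (and p q) p)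
  | andE2 {Γ} {p q} : Proof Γ (imp (and p q) q)
  | orI1 {Γ} {p q} : Proof Γ (imp p (or p q))
  | orI2 {Γ} {p q} : Proof Γ (imp q (or p q))
  | orE {Γ} {p q r} : Proof Γ (imp (imp p r) (imp (imp q r) (imp (or p q) r)))
  | topI {Γ} : Proof Γ top
  | botE {Γ} {p} : Proof Γ (imp bot p)
  | cimpTop {Γ} : Proof Γ (cimp top top)
  | cimpFix {Γ} {p} : Proof Γ (imp (cimp p p) p)
  | cimpMono {Γ} {p p' q q'} :
      Proof Γ (imp (imp p' p) (imp (cimp p q) (imp (imp q q') (cimp p' q'))))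

end PCL

end Contracts

open Contracts

namespace Contracts.PCL

variable {H : Type*} [HeytingAlgebra H]

theorem himp_himp_inf_himp_inf_le (a b c : H) : (a ⇨ b ⇨ c) ⊓ (a ⇨ b) ⊓ a ≤ c :=
  calc (a ⇨ b ⇨ c) ⊓ (a ⇨ b) ⊓ a = (a ⇨ b ⇨ c) ⊓ (a ⊓ b) := by
        rw [inf_assoc, himp_inf_self, inf_comm b]
    _ ≤ c := by rw [himp_himp]; exact himp_inf_le

def heytingCimp (x y : H) : H := y ⊔ (xᶜ ⊓ yᶜᶜ)

theorem heytingCimp_top_right (x : H) : heytingCimp x ⊤ = ⊤ := by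
  simp [heytingCimp]

theorem heytingCimp_self (x : H) : heytingCimp x x = x := by
  simp [heytingCimp]

theorem heytingCimp_bot_left (y : H) : heytingCimp ⊥ y = yᶜᶜ := by
  simp [heytingCimp, le_compl_compl]

theorem himp_inf_heytingCimp_inf_himp_le (x x' y y' : H) :
    (x' ⇨ x) ⊓ heytingCimp x y ⊓ (y ⇨ y') ≤ heytingCimp x' y' := by
  have hy : y ⊓ (y ⇨ y') ≤ y' := inf_himp_le
  have hx : (x' ⇨ x) ⊓ xᶜ ≤ x'ᶜ := by
    simpa only [himp_bot] using himp_triangle x' x ⊥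
  have hyy : yᶜᶜ ⊓ (y ⇨ y') ≤ y'ᶜᶜ :=
    calc yᶜᶜ ⊓ (y ⇨ y') ≤ yᶜᶜ ⊓ (yᶜᶜ ⇨ y'ᶜᶜ) :=
          inf_le_inf_left _ (compl_compl_himp_distrib y y' ▸ le_compl_compl)
      _ ≤ y'ᶜᶜ := inf_himp_le
  simp only [heytingCimp, inf_sup_left, inf_sup_right]
  refine sup_le (le_sup_of_le_left ?_) (le_sup_of_le_right (le_inf ?_ ?_))
  · exact (inf_le_inf_right _ inf_le_right).trans hy
  · exact inf_le_left.trans ((inf_le_inf_left _ inf_le_left).trans hx)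
  · exact (inf_le_inf_right _ (inf_le_right.trans inf_le_right)).trans hyy

variable {A : Type}

def eval (v : A → H) : PCL A → H
  | atom a => v a
  | top => ⊤
  | bot => ⊥
  | and p q => eval v p ⊓ eval v q
  | or p q => eval v p ⊔ eval v q
  | imp p q => eval v p ⇨ eval v q
  | cimp p q => heytingCimp (eval v p) (eval v q)

theorem Proof.eval_eq_top {Γ : Set (PCL A)} {p : PCL A} (h : Proof Γ p) (v : A → H)
    (hΓ : ∀ g ∈ Γ, eval v g = ⊤) : eval v p = ⊤ := by
  induction h with
  | ax h => exact hΓ _ h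
  | mp _ _ ih₁ ih₂ =>
    rwa [eval, himp_eq_top_iff, ih₂, top_le_iff] at ih₁
  | topI => rfl
  | cimpTop => exact heytingCimp_top_right ⊤
  | _ =>
    simp [eval, le_himp_iff, sup_himp_distrib, himp_himp_inf_himp_inf_le, heytingCimp_self,
      himp_inf_heytingCimp_inf_himp_le]

end Contracts.PCL

/-- Failure of partial handshaking in PCL: for pairwise distinct atoms
`a, b, c, a', b', c'`, the theory `{(b ∧ c) ↠ a, (a ∧ c) ↠ b, (a' ∧ b') ↠ c'}`
does not derive `a`. -/
theorem pcl_partial_handshake_fails {A : Type} (a b c a' b' c' : A)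
    (hdist : ([a, b, c, a', b', c'] : List A).Pairwise (· ≠ ·)) :
    ¬ PCL.Proof
        ({ .cimp (.and (.atom b) (.atom c)) (.atom a),
           .cimp (.and (.atom a) (.atom c)) (.atom b),
           .cimp (.and (.atom a') (.atom b')) (.atom c') } : Set (PCL A))
        (.atom a) := by
  classical
  obtain ⟨⟨-, hac, -, -, hac'⟩, ⟨hbc, -, -, hbc'⟩, ⟨-, -, hcc'⟩, -⟩ := by simpa using hdist
  let v : A → Fin 3 := fun x => if x = c then ⊥ else if x = c' then ⊤ else 1
  have hva : v a = 1 := by simp [v, hac, hac']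
  have hvb : v b = 1 := by simp [v, hbc, hbc']
  have hvc : v c = ⊥ := by simp [v]
  have hvc' : v c' = ⊤ := by simp [v, Ne.symm hcc']
  intro h
  have ha := h.eval_eq_top v ?_
  · exact absurd ha (by simp only [PCL.eval, hva]; decide)
  · rintro g (rfl | rfl | rfl) <;>
      simp only [PCL.eval, hva, hvb, hvc, hvc', inf_bot_eq, PCL.heytingCimp_bot_left,
        PCL.heytingCimp_top_right] <;> decide
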